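/- On ℝ^{2p} with coordinates (x₁,…,x_p,y₁,…,y_p), let ψ be a smooth symmetric 2-tensor field depending only on x, and define the metric g(∂_{x_i},∂_{x_j})=ψ_{ij}(x), g(∂_{x_i},∂_{y_j})=δ_{ij}, g(∂_{y_i},∂_{y_j})=0. Then the covariant derivatives satisfy ∇_{∂_{x_i}}∂_{x_j} = Σ_k Γ_{ij}{}^k(x)·∂_{y_k} with Γ_{ijk} = ½(∂_{x_j}ψ_{ik}+∂_{x_i}ψ_{jk}-∂_{x_k}ψ_{ij}), and ∇_{∂_{y_i}}∂_{y_j}=∇_{∂_{x_i}}∂_{y_j}=0. In particular the coordinate vector fields ∂_{y_i} are parallel. -/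

import Mathlib

open scoped BigOperators

namespace Stmt11

variable {p : ℕ}

/-- Coordinate index: `Sum.inl i ↦ xᵢ`, `Sum.inr i ↦ yᵢ`. -/
abbrev Idx (p : ℕ) := Fin p ⊕ Fin p

/-- The metric `g²_{2p,ψ}`: `g(∂xᵢ,∂xⱼ) = ψᵢⱼ(x)`, `g(∂xᵢ,∂yⱼ) = δᵢⱼ`,
`g(∂yᵢ,∂yⱼ) = 0`. -/
def g (ψ : (Fin p → ℝ) → Fin p → Fin p → ℝ) (q : Idx p → ℝ) : Idx p → Idx p → ℝ :=
  fun a b =>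
    match a, b with
    | Sum.inl i, Sum.inl j => ψ (fun l => q (Sum.inl l)) i j
    | Sum.inl i, Sum.inr j => if i = j then 1 else 0
    | Sum.inr i, Sum.inl j => if i = j then 1 else 0
    | Sum.inr _, Sum.inr _ => 0

/-- Partial derivative of a function of the `2p` coordinates in the `a`-th direction. -/
noncomputable def pd (a : Idx p) (h : (Idx p → ℝ) → ℝ) (q : Idx p → ℝ) : ℝ :=
  fderiv ℝ h q (Pi.single a 1)

/-- Partial derivative of a function of the `p` coordinates `x` in the `i`-th direction. -/
noncomputable def pdx (i : Fin p) (h : (Fin p → ℝ) → ℝ) (x : Fin p → ℝ) : ℝ :=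
  fderiv ℝ h x (Pi.single i 1)

/-- Christoffel symbol of the first kind (Koszul formula for coordinate fields):
`g(∇_{∂a}∂b, ∂c)`. -/
noncomputable def ΓFirst (ψ : (Fin p → ℝ) → Fin p → Fin p → ℝ) (q : Idx p → ℝ) (a b c : Idx p) : ℝ :=
  (pd a (fun r => g ψ r b c) q + pd b (fun r => g ψ r a c) q
    - pd c (fun r => g ψ r a b) q) / 2

/-- `Γᵢⱼₖ = ½(∂_{xⱼ}ψᵢₖ + ∂_{xᵢ}ψⱼₖ - ∂_{xₖ}ψᵢⱼ)`. -/
noncomputable def Γψ (ψ : (Fin p → ℝ) → Fin p → Fin p → ℝ) (i j k : Fin p) (x : Fin p → ℝ) : ℝ :=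
  (pdx j (fun y => ψ y i k) x + pdx i (fun y => ψ y j k) x
    - pdx k (fun y => ψ y i j) x) / 2

end Stmt11

namespace Stmt11

variable {p : ℕ}

/-- The continuous linear projection from all `2p` coordinates to the `x` coordinates. -/
noncomputable def projL (p : ℕ) : ((Idx p → ℝ) →L[ℝ] (Fin p → ℝ)) :=
  ContinuousLinearMap.pi (fun l => ContinuousLinearMap.proj (Sum.inl l))

lemma pd_const (a : Idx p) (c : ℝ) (q : Idx p → ℝ) : pd a (fun _ => c) q = 0 := by
  simp [pd]

lemma pd_comp (h : (Fin p → ℝ) → ℝ) (hd : Differentiable ℝ h) (q : Idx p → ℝ) (a : Idx p) :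
    pd a (fun r => h (fun l => r (Sum.inl l))) q =
      match a with
      | Sum.inl m => pdx m h (fun l => q (Sum.inl l))
      | Sum.inr _ => 0 := by
  have hL : ∀ r : Idx p → ℝ, projL p r = fun l => r (Sum.inl l) := fun r => rfl
  have hf : fderiv ℝ (fun r => h (fun l => r (Sum.inl l))) q
      = (fderiv ℝ h (fun l => q (Sum.inl l))).comp (projL p) := by
    have := ((hd (projL p q)).hasFDerivAt.comp q (projL p).hasFDerivAt).fderiv
    simpa [hL, Function.comp_def] using this
  unfold pd
  rw [hf]
  cases a with
  | inl m =>
    have : projL p (Pi.single (Sum.inl m : Idx p) 1) = Pi.single m 1 := by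
      funext l
      rw [hL]
      simp [Pi.single_apply, Sum.inl.injEq]
    simp [pdx, this]
  | inr m =>
    have : projL p (Pi.single (Sum.inr m : Idx p) 1) = 0 := by
      funext l
      rw [hL]
      simp [Pi.single_apply]
    simp [this]

lemma pd_comp_inl (h : (Fin p → ℝ) → ℝ) (hd : Differentiable ℝ h) (q : Idx p → ℝ) (m : Fin p) :
    pd (Sum.inl m) (fun r => h (fun l => r (Sum.inl l))) q = pdx m h (fun l => q (Sum.inl l)) :=
  pd_comp h hd q (Sum.inl m)

lemma pd_comp_inr (h : (Fin p → ℝ) → ℝ) (hd : Differentiable ℝ h) (q : Idx p → ℝ) (m : Fin p) :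
    pd (Sum.inr m) (fun r => h (fun l => r (Sum.inl l))) q = 0 :=
  pd_comp h hd q (Sum.inr m)

end Stmt11

/-- For the metric `g²_{2p,ψ}` (with `ψ` a smooth symmetric 2-tensor depending only on
`x`), the Levi-Civita connection satisfies `∇_{∂xᵢ}∂xⱼ = ∑ₖ Γᵢⱼ{}^k(x) ∂yₖ` with
`Γᵢⱼₖ = ½(∂ⱼψᵢₖ + ∂ᵢψⱼₖ - ∂ₖψᵢⱼ)`, and `∇_{∂yᵢ}∂yⱼ = ∇_{∂xᵢ}∂yⱼ = 0`; in particular the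
fields `∂yᵢ` are parallel.  (The covariant derivative `∇_{∂a}∂b` is characterized through
the Koszul formula by its inner products `ΓFirst ψ q a b c = g(∇_{∂a}∂b, ∂c)`.) -/
theorem stmt_11 (p : ℕ) (ψ : (Fin p → ℝ) → Fin p → Fin p → ℝ)
    (hsym : ∀ x i j, ψ x i j = ψ x j i)
    (hsmooth : ∀ i j, ContDiff ℝ (⊤ : ℕ∞) (fun x => ψ x i j))
    (q : Stmt11.Idx p → ℝ) :
    (∀ i j c, Stmt11.ΓFirst ψ q (Sum.inl i) (Sum.inl j) c =
      ∑ k : Fin p, Stmt11.Γψ ψ i j k (fun l => q (Sum.inl l)) *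
        Stmt11.g ψ q (Sum.inr k) c) ∧
    (∀ (a : Stmt11.Idx p) (j : Fin p) (c : Stmt11.Idx p),
      Stmt11.ΓFirst ψ q a (Sum.inr j) c = 0) ∧
    (∀ (i : Fin p) (b c : Stmt11.Idx p),
      Stmt11.ΓFirst ψ q (Sum.inr i) b c = 0) := by
  have hdiff : ∀ i j, Differentiable ℝ (fun x => ψ x i j) :=
    fun i j => (hsmooth i j).differentiable (by simp)
  refine ⟨?_, ?_, ?_⟩
  · intro i j c
    cases c with
    | inl m =>
      simp only [Stmt11.ΓFirst, Stmt11.g,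
        Stmt11.pd_comp_inl _ (hdiff j m), Stmt11.pd_comp_inl _ (hdiff i m),
        Stmt11.pd_comp_inl _ (hdiff i j)]
      rw [Finset.sum_eq_single m]
      · simp only [Stmt11.Γψ, Stmt11.g, eq_self_iff_true, if_true, mul_one]
        ring
      · intro k _ hk
        simp [Stmt11.g, hk]
      · intro h; exact absurd (Finset.mem_univ m) h
    | inr m =>
      simp only [Stmt11.ΓFirst, Stmt11.g, Stmt11.pd_const,
        Stmt11.pd_comp_inr _ (hdiff i j)]
      simp [Stmt11.g]
  · intro a j c
    cases a with
    | inl i =>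
      cases c with
      | inl m =>
        simp only [Stmt11.ΓFirst, Stmt11.g, Stmt11.pd_const,
          Stmt11.pd_comp_inr _ (hdiff i m)]
        ring
      | inr m =>
        simp only [Stmt11.ΓFirst, Stmt11.g, Stmt11.pd_const]
        ring
    | inr i =>
      cases c with
      | inl m =>
        simp only [Stmt11.ΓFirst, Stmt11.g, Stmt11.pd_const]
        ring
      | inr m =>
        simp only [Stmt11.ΓFirst, Stmt11.g, Stmt11.pd_const]
        ring
  · intro i b c
    cases b with
    | inl j =>
      cases c with
      | inl m =>
        simp only [Stmt11.ΓFirst, Stmt11.g, Stmt11.pd_const,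
          Stmt11.pd_comp_inr _ (hdiff j m)]
        ring
      | inr m =>
        simp only [Stmt11.ΓFirst, Stmt11.g, Stmt11.pd_const]
        ring
    | inr j =>
      cases c with
      | inl m =>
        simp only [Stmt11.ΓFirst, Stmt11.g, Stmt11.pd_const]
        ring
      | inr m =>
        simp only [Stmt11.ΓFirst, Stmt11.g, Stmt11.pd_const]
        ring
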